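/- Let (X, A_τ, P) be a fully probabilistic transition system. The function μ̃_P, defined on upward-closed subsets U of Path(X) (the open sets of the Alexandroff topology on the path order) by μ̃_P(U) = Σ_{p ∈ U*} μ_P(p), is a locally finite and Scott-continuous valuation: μ̃_P(∅) = 0; U ⊆ V implies μ̃_P(U) ≤ μ̃_P(V); μ̃_P(U) + μ̃_P(V) = μ̃_P(U∪V) + μ̃_P(U∩V); μ̃_P(⋃_i U_i) = sup_i μ̃_P(U_i) for every family of open sets directed under inclusion; and every path has an open neighbourhood of finite μ̃_P-value. -/

import Mathlib

open scoped Classical ENNReal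

namespace PaperBB

/-! ## Paths -/

/-- Words over the alphabet `A_τ = A ∪ {τ}`; `none` plays the role of the silent action `τ`. -/
abbrev Word (A : Type*) := List (Option A)

/-- A path on `X`: a function whose codomain is `X` and whose domain is the set of all
prefixes of some word `σ ∈ A_τ*`. -/
structure Path (A : Type*) (X : Type*) where
  word : Word A
  fn : {σ : Word A // σ <+: word} → X

namespace Path

variable {A X Y : Type*}

theorem prefixSnoc (σ : Word A) (a : Option A) : σ <+: σ ++ [a] := ⟨[a], rfl⟩

theorem nilPrefix (w : Word A) : ([] : Word A) <+: w := ⟨w, rfl⟩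

/-- The value `p(ε)` of a path at the empty word. -/
def start (p : Path A X) : X := p.fn ⟨[], nilPrefix _⟩

/-- The trace of a path: the maximal word in its domain. -/
def trace (p : Path A X) : Word A := p.word

/-- The last state reached by a path: `last p = p (trace p)`. -/
def last (p : Path A X) : X := p.fn ⟨p.word, List.prefix_refl _⟩

/-- `Path(f)(p) = f ∘ p`. -/
def map (f : X → Y) (p : Path A X) : Path A Y := ⟨p.word, fun σ => f (p.fn σ)⟩

/-- The prefix order on paths: `p ⪯ q` iff `dom p ⊆ dom q` and `q` agrees with `p` on `dom p`. -/
def le (p q : Path A X) : Prop :=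
  ∃ h : p.word <+: q.word, ∀ (σ : Word A) (hσ : σ <+: p.word),
    q.fn ⟨σ, hσ.trans h⟩ = p.fn ⟨σ, hσ⟩

/-- The strict prefix order on paths. -/
def lt (p q : Path A X) : Prop := p.le q ∧ p ≠ q

/-- `φ` is a stutter basis for the path `p`. -/
def IsStutterBasis (p : Path A X) (φ : {σ : Word A // σ <+: p.word} → Word A) : Prop :=
  φ ⟨[], nilPrefix _⟩ = [] ∧
  (∀ (σ : Word A) (h : σ ++ [(none : Option A)] <+: p.word),
      (p.fn ⟨σ ++ [none], h⟩ = p.fn ⟨σ, (prefixSnoc σ none).trans h⟩ →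
        φ ⟨σ ++ [none], h⟩ = φ ⟨σ, (prefixSnoc σ none).trans h⟩) ∧
      (p.fn ⟨σ ++ [none], h⟩ ≠ p.fn ⟨σ, (prefixSnoc σ none).trans h⟩ →
        φ ⟨σ ++ [none], h⟩ = φ ⟨σ, (prefixSnoc σ none).trans h⟩ ++ [none])) ∧
  (∀ (σ : Word A) (a : A) (h : σ ++ [some a] <+: p.word),
      φ ⟨σ ++ [some a], h⟩ = φ ⟨σ, (prefixSnoc σ (some a)).trans h⟩ ++ [some a])

/-- Auxiliary recursion computing the stutter basis of `p` on the prefix of length `n`. -/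
noncomputable def stutterWordAux (p : Path A X) : ℕ → Word A
  | 0 => []
  | n + 1 =>
    if h : n < p.word.length then
      if (p.word.get ⟨n, h⟩) = none ∧
          p.fn ⟨p.word.take (n + 1), List.take_prefix _ _⟩ =
            p.fn ⟨p.word.take n, List.take_prefix _ _⟩ then
        stutterWordAux p n
      else stutterWordAux p n ++ [p.word.get ⟨n, h⟩]
    else []

/-- The (unique) stutter basis of a path `p`. -/
noncomputable def stutterBasis (p : Path A X) (σ : {σ : Word A // σ <+: p.word}) : Word A :=
  stutterWordAux p σ.1.length

/-- The stutter invariant path `♮p` relative to `p`: its domain is the image of the stutter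
basis `φ` and it satisfies `♮p ∘ φ = p`. -/
noncomputable def stutter (p : Path A X) : Path A X where
  word := stutterBasis p ⟨p.word, List.prefix_refl _⟩
  fn := fun w =>
    haveI : Nonempty {σ : Word A // σ <+: p.word} := ⟨⟨[], nilPrefix _⟩⟩
    p.fn (Function.invFun (stutterBasis p) w.1)

end Path

/-- Stutter equivalence of paths: `p ∼ q` iff `♮p = ♮q`. -/
def StutterEquiv {A X : Type*} (p q : Path A X) : Prop := p.stutter = q.stutter

instance pathSetoid (A X : Type*) : Setoid (Path A X) :=
  ⟨StutterEquiv, ⟨fun _ => rfl, Eq.symm, Eq.trans⟩⟩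

/-- The set `Path_∼(X)` of paths up to stutter equivalence. -/
abbrev PathQuot (A X : Type*) := Quotient (pathSetoid A X)

/-- The quotient map `π : Path(X) → Path_∼(X)`. -/
def PathQuot.mk {A X : Type*} (p : Path A X) : PathQuot A X := Quotient.mk _ p

/-- `Path_∼(f)[p] = [f ∘ p]`. -/
noncomputable def PathQuot.map {A X Y : Type*} (f : X → Y) (c : PathQuot A X) : PathQuot A Y :=
  PathQuot.mk (Path.map f c.out)

/-- The order on `Path_∼(X)`: `[p] ⪯ [q]` iff `♮p ⪯ ♮q`. -/
def PathQuot.le {A X : Type*} (c d : PathQuot A X) : Prop :=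
  ∃ p q : Path A X, PathQuot.mk p = c ∧ PathQuot.mk q = d ∧ p.stutter.le q.stutter

/-- The set of words of the shape `τ*aτ*`. -/
def TauStarATauStar {A : Type*} (a : A) (w : Word A) : Prop :=
  ∃ n m : ℕ, w = List.replicate n none ++ some a :: List.replicate m none

/-! ## Prefix orders, the sobrification `X∞`, Scott topology, valuations -/

section OrderTheory

variable {Z : Type*}

/-- Downward-closed subsets: the closed sets of the Alexandroff topology. -/
def IsDownClosed [Preorder Z] (C : Set Z) : Prop :=
  ∀ ⦃x⦄, x ∈ C → ∀ ⦃y⦄, y ≤ x → y ∈ C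

/-- Irreducible closed subsets of the Alexandroff topology. -/
def IsIrredClosed [Preorder Z] (C : Set Z) : Prop :=
  IsDownClosed C ∧ C.Nonempty ∧
    ∀ C₁ C₂ : Set Z, IsDownClosed C₁ → IsDownClosed C₂ → C = C₁ ∪ C₂ → C = C₁ ∨ C = C₂

/-- A set is non-sober if it is irreducible and closed (w.r.t. the Alexandroff topology) but is
not the closure (the principal ideal) of any single point. -/
def NonSober [Preorder Z] (C : Set Z) : Prop :=
  IsIrredClosed C ∧ ¬ ∃ x : Z, C = {y | y ≤ x}

/-- `X∞`: `X` together with a fresh limit point `∞_C` for every non-sober `C ⊆ X`. -/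
def Extended (Z : Type*) [Preorder Z] := Z ⊕ {C : Set Z // NonSober C}

/-- The order `⪯'` on `X∞` extending `⪯` by `∞_C ⪯' ∞_C` and `x ⪯' ∞_C` for `x ∈ C`. -/
def extLE [Preorder Z] : Extended Z → Extended Z → Prop
  | Sum.inl x, Sum.inl y => x ≤ y
  | Sum.inl x, Sum.inr C => x ∈ C.1
  | Sum.inr _, Sum.inl _ => False
  | Sum.inr C, Sum.inr D => C = D

instance [PartialOrder Z] : PartialOrder (Extended Z) where
  le := extLE
  le_refl a := by
    cases a with
    | inl x => exact le_refl x
    | inr C => exact rfl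
  le_trans a b c hab hbc := by
    cases a with
    | inl x =>
      cases b with
      | inl y =>
        cases c with
        | inl z => exact le_trans hab hbc
        | inr C => exact C.2.1.1 hbc hab
      | inr C =>
        cases c with
        | inl z => exact False.elim hbc
        | inr D => exact (show C = D from hbc) ▸ hab
    | inr C =>
      cases b with
      | inl y => exact False.elim hab
      | inr D =>
        cases c with
        | inl z => exact False.elim hbc
        | inr E => exact (show C = D from hab).trans (show D = E from hbc)
  le_antisymm a b hab hba := by
    cases a with
    | inl x =>
      cases b with
      | inl y => exact congrArg Sum.inl (le_antisymm hab hba)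
      | inr C => exact False.elim hba
    | inr C =>
      cases b with
      | inl y => exact False.elim hab
      | inr D => exact congrArg Sum.inr hab

/-- Scott-open subsets: upward closed and inaccessible by directed joins. -/
def ScottOpen {W : Type*} [Preorder W] (U : Set W) : Prop :=
  (∀ ⦃x y⦄, x ∈ U → x ≤ y → y ∈ U) ∧
  ∀ D : Set W, D.Nonempty → DirectedOn (· ≤ ·) D → ∀ s : W, IsLUB D s → s ∈ U →
    (D ∩ U).Nonempty

/-- Scott-closed subsets. -/
def ScottClosed {W : Type*} [Preorder W] (C : Set W) : Prop := ScottOpen Cᶜ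

end OrderTheory

section Valuation

variable {W : Type*}

/-- A valuation on a collection `Op` of open sets: strict, monotone and modular. -/
def IsValuationOn (Op : Set (Set W)) (μ : Set W → ℝ≥0∞) : Prop :=
  μ ∅ = 0 ∧
  (∀ U ∈ Op, ∀ V ∈ Op, U ⊆ V → μ U ≤ μ V) ∧
  (∀ U ∈ Op, ∀ V ∈ Op, μ U + μ V = μ (U ∪ V) + μ (U ∩ V))

/-- Scott continuity of a valuation: it commutes with unions of directed families of opens. -/
def IsScottContinuousOn (Op : Set (Set W)) (μ : Set W → ℝ≥0∞) : Prop :=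
  ∀ 𝒟 : Set (Set W), 𝒟.Nonempty → (∀ U ∈ 𝒟, U ∈ Op) → DirectedOn (· ⊆ ·) 𝒟 →
    μ (⋃₀ 𝒟) = ⨆ U ∈ 𝒟, μ U

/-- Local finiteness: every point has a finitely valued open neighbourhood. -/
def IsLocallyFiniteOn (Op : Set (Set W)) (μ : Set W → ℝ≥0∞) : Prop :=
  ∀ x : W, ∃ U ∈ Op, x ∈ U ∧ μ U < ⊤

/-- The open sets of the Alexandroff topology of a preorder: the upward-closed sets. -/
def UpClosedSets (W : Type*) [Preorder W] : Set (Set W) :=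
  {U | ∀ ⦃x y⦄, x ∈ U → x ≤ y → y ∈ U}

/-- The Scott-open subsets of a preorder. -/
def ScottOpens (W : Type*) [Preorder W] : Set (Set W) := {U | ScottOpen U}

end Valuation

/-- The separation closure `U* = {x ∈ U | cl {x} ∩ U = {x}}` of a subset of a
topological space. -/
def sepClosure {W : Type*} [TopologicalSpace W] (U : Set W) : Set W :=
  {x ∈ U | closure {x} ∩ U = {x}}

/-! ## Fully probabilistic transition systems -/

section Prob

variable {A X : Type*}

/-- A fully probabilistic transition system. -/
structure FPTS (A X : Type*) where
  P : X → Option A → X → ℝ≥0∞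
  le_one : ∀ x a y, P x a y ≤ 1
  finite_support : ∀ x : X, {q : Option A × X | 0 < P x q.1 q.2}.Finite
  total : ∀ x : X,
    (∑' q : Option A × X, P x q.1 q.2) = 0 ∨ (∑' q : Option A × X, P x q.1 q.2) = 1

/-- `p` is an execution from `x`. -/
def IsExec (S : FPTS A X) (x : X) (p : Path A X) : Prop :=
  p.start = x ∧
  ∀ (σ : Word A) (a : Option A) (h : σ ++ [a] <+: p.word),
    0 < S.P (p.fn ⟨σ, (Path.prefixSnoc σ a).trans h⟩) a (p.fn ⟨σ ++ [a], h⟩)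

/-- The weight function `μ_P` on paths: the product of the transition probabilities along an
execution, and `0` on paths that are not executions. -/
noncomputable def pathWeight (S : FPTS A X) (p : Path A X) : ℝ≥0∞ :=
  if ∃ x : X, IsExec S x p then
    ∏ i : Fin p.word.length,
      S.P (p.fn ⟨p.word.take i.1, List.take_prefix _ _⟩)
          (p.word.get i)
          (p.fn ⟨p.word.take (i.1 + 1), List.take_prefix _ _⟩)
  else 0

/-- `x →_L Y`: executions from `x` with trace in `L`, last state in `Y`, and no strict prefix
witnessing the same. -/
def stepSet (S : FPTS A X) (x : X) (L : Set (Word A)) (Y : Set X) : Set (Path A X) :=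
  {p | IsExec S x p ∧ p.trace ∈ L ∧ p.last ∈ Y ∧
       ∀ q : Path A X, q.lt p → q.trace ∈ L → q.last ∉ Y}

/-- `x ⇒_L Y`: paths starting in `x` with trace in `L` and last state in `Y`. -/
def reachSet (x : X) (L : Set (Word A)) (Y : Set X) : Set (Path A X) :=
  {p | p.start = x ∧ p.trace ∈ L ∧ p.last ∈ Y}

/-- The separation closure `U*` of a set of paths (w.r.t. the prefix order). -/
def sepMin (U : Set (Path A X)) : Set (Path A X) :=
  {p ∈ U | ∀ q ∈ U, q.le p → q = p}

/-- The upward-closed sets of paths: the opens of the Alexandroff topology on `Path(X)`. -/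
def pathUpSets (A X : Type*) : Set (Set (Path A X)) :=
  {U | ∀ p ∈ U, ∀ q : Path A X, p.le q → q ∈ U}

end Prob

/-! ## Labelled transition systems -/

section LTS

variable {A X : Type}

/-- `p` is an execution of the labelled transition system `Tr` from `x`. -/
def IsExecLTS (Tr : X → Option A → X → Prop) (x : X) (p : Path A X) : Prop :=
  p.start = x ∧
  ∀ (σ : Word A) (a : Option A) (h : σ ++ [a] <+: p.word),
    Tr (p.fn ⟨σ, (Path.prefixSnoc σ a).trans h⟩) a (p.fn ⟨σ ++ [a], h⟩)

/-- Branching bisimulation. -/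
def IsBranchingBisim (Tr : X → Option A → X → Prop) (R : X → X → Prop) : Prop :=
  Symmetric R ∧
  ∀ (x x' y : X) (a : Option A), Tr x a x' → R x y →
    (a = none ∧ R x' y) ∨
    ∃ y' y'' : X, Relation.ReflTransGen (fun u v => Tr u none v) y y' ∧
      Tr y' a y'' ∧ R x y' ∧ R x' y''

/-- Two states are branching bisimilar if some branching bisimulation relates them. -/
def BranchingBisimilar (Tr : X → Option A → X → Prop) (x x' : X) : Prop :=
  ∃ R : X → X → Prop, IsBranchingBisim Tr R ∧ R x x'

/-- The path-based coalgebra `α : X → P(Path_∼ X)` of a labelled transition system: the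
stutter classes of executions from `x` with trace in `τ*a` (for some `a ∈ A`) or in `τ*`. -/
def ltsAlpha (Tr : X → Option A → X → Prop) (x : X) : Set (PathQuot A X) :=
  {c | ∃ p : Path A X, IsExecLTS Tr x p ∧
    ((∃ (a : A) (n : ℕ), p.word = List.replicate n none ++ [some a]) ∨
     (∃ n : ℕ, p.word = List.replicate n (none : Option A))) ∧
    c = PathQuot.mk p}

end LTS


/-!
Under the prefix order the paths below a given path form a finite chain, so every element of a
set `W` of paths lies above exactly one minimal element of `W`. For `T ⊆ W` this splits the sum
over `T*` into the sums over `(T ∩ ↑q)*`, `q ∈ W*`, and for an up-set `T` containing `q` the inner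
sum is just `μ(q)`; modularity then holds term by term over `(U ∪ V)*`. Monotonicity, and with it
Scott continuity, comes from the tree structure of executions: a path is its start state followed
by a list of (action, state) steps, and since the outgoing probabilities of a state sum to at most
one, the weights of an antichain of extensions of `q` sum to at most `μ(q)`.
-/

class IsForestOrder (α : Type*) [Preorder α] : Prop where
  isChain_Iic : ∀ p : α, IsChain (· ≤ ·) (Set.Iic p)

section MinimalSum

variable {α : Type*} [PartialOrder α]

/-- For `f = pathWeight S` this is the paper's `μ̃_P(U) = ∑_{p ∈ U*} μ_P(p)`. -/
noncomputable def minimalSum (f : α → ℝ≥0∞) (U : Set α) : ℝ≥0∞ :=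
  ∑' p : {p | Minimal (· ∈ U) p}, f p

def DominatesAntichains (f : α → ℝ≥0∞) : Prop :=
  ∀ q (s : Set α), IsAntichain (· ≤ ·) s → s ⊆ Set.Ici q → ∑' p : s, f p ≤ f q

theorem eq_of_minimal_of_le_of_le [IsForestOrder α] {U : Set α} {p q r : α}
    (hq : Minimal (· ∈ U) q) (hr : Minimal (· ∈ U) r) (hqp : q ≤ p) (hrp : r ≤ p) : q = r := by
  rcases (IsForestOrder.isChain_Iic p).total hqp hrp with h | h
  · exact hr.eq_of_le hq.prop h
  · exact (hq.eq_of_le hr.prop h).symm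

theorem minimal_inter_Ici_iff [IsForestOrder α] {T W : Set α} (hTW : T ⊆ W) {p q : α}
    (hq : Minimal (· ∈ W) q) :
    Minimal (· ∈ T ∩ Set.Ici q) p ↔ Minimal (· ∈ T) p ∧ q ≤ p := by
  refine ⟨fun hp => ⟨⟨hp.prop.1, fun r hr hrp => ?_⟩, hp.prop.2⟩,
    fun hp => ⟨⟨hp.1.prop, hp.2⟩, fun r hr hrp => hp.1.2 hr.1 hrp⟩⟩
  -- `q` and `r` are comparable, both lying below `p`, and `q` is minimal in `W ⊇ T`
  have hqr : q ≤ r := ((IsForestOrder.isChain_Iic p).total hp.prop.2 hrp).elim id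
    fun hrq => (hq.eq_of_le (hTW hr) hrq).ge
  exact hp.2 ⟨hr, hqr⟩ hrp

theorem minimalSum_eq_tsum_minimalSum_inter_Ici [WellFoundedLT α] [IsForestOrder α]
    (f : α → ℝ≥0∞) {T W : Set α} (hTW : T ⊆ W) :
    minimalSum f T = ∑' q : {q | Minimal (· ∈ W) q}, minimalSum f (T ∩ Set.Ici q) := by
  have hunion : {p | Minimal (· ∈ T) p} =
      ⋃ q ∈ {q | Minimal (· ∈ W) q}, {p | Minimal (· ∈ T ∩ Set.Ici q) p} := by
    ext p
    simp only [Set.mem_ofPred_eq, Set.mem_iUnion, exists_prop]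
    refine ⟨fun hp => ?_, fun ⟨q, hq, hp⟩ => ((minimal_inter_Ici_iff hTW hq).1 hp).1⟩
    obtain ⟨q, hqp, hq⟩ := exists_minimal_le_of_wellFoundedLT (· ∈ W) p (hTW hp.prop)
    exact ⟨q, hq, (minimal_inter_Ici_iff hTW hq).2 ⟨hp, hqp⟩⟩
  have hdisj : Set.PairwiseDisjoint {q | Minimal (· ∈ W) q}
      fun q => {p | Minimal (· ∈ T ∩ Set.Ici q) p} := by
    refine fun q₁ hq₁ q₂ hq₂ hne => Set.disjoint_left.2 fun p hp₁ hp₂ => hne ?_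
    exact eq_of_minimal_of_le_of_le hq₁ hq₂
      ((minimal_inter_Ici_iff hTW hq₁).1 hp₁).2 ((minimal_inter_Ici_iff hTW hq₂).1 hp₂).2
  rw [minimalSum, hunion, ENNReal.tsum_biUnion' hdisj]
  rfl

theorem minimalSum_Ici (f : α → ℝ≥0∞) (q : α) : minimalSum f (Set.Ici q) = f q := by
  have : {p | Minimal (· ∈ Set.Ici q) p} = {q} := Set.ext fun _ => minimal_ge_iff
  rw [minimalSum, this, tsum_singleton]

theorem inter_Ici_eq_Ici {U : Set α} (hU : IsUpperSet U) {q : α} (hq : q ∈ U) :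
    U ∩ Set.Ici q = Set.Ici q :=
  Set.inter_eq_right.2 (hU.Ici_subset hq)

theorem minimalSum_mono [WellFoundedLT α] [IsForestOrder α] {f : α → ℝ≥0∞}
    (hf : DominatesAntichains f) {T W : Set α} (hTW : T ⊆ W) :
    minimalSum f T ≤ minimalSum f W := by
  rw [minimalSum_eq_tsum_minimalSum_inter_Ici f hTW]
  exact ENNReal.tsum_le_tsum fun q =>
    hf q _ (setOfPred_minimal_antichain _) fun _ hp => hp.prop.2

theorem minimalSum_add_minimalSum [WellFoundedLT α] [IsForestOrder α] (f : α → ℝ≥0∞)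
    {U V : Set α} (hU : IsUpperSet U) (hV : IsUpperSet V) :
    minimalSum f U + minimalSum f V = minimalSum f (U ∪ V) + minimalSum f (U ∩ V) := by
  rw [minimalSum_eq_tsum_minimalSum_inter_Ici f (Set.subset_union_left (t := V)),
    minimalSum_eq_tsum_minimalSum_inter_Ici f (Set.subset_union_right (s := U)),
    minimalSum_eq_tsum_minimalSum_inter_Ici f subset_rfl,
    minimalSum_eq_tsum_minimalSum_inter_Ici f (Set.inter_subset_left.trans Set.subset_union_left),
    ← ENNReal.tsum_add, ← ENNReal.tsum_add]
  refine tsum_congr fun q => ?_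
  rw [inter_Ici_eq_Ici (hU.union hV) q.2.prop]
  by_cases hqU : q.1 ∈ U
  · rw [inter_Ici_eq_Ici hU hqU, Set.inter_comm U V, Set.inter_assoc, inter_Ici_eq_Ici hU hqU]
  · have hqV : q.1 ∈ V := q.2.prop.resolve_left hqU
    rw [inter_Ici_eq_Ici hV hqV, Set.inter_assoc, inter_Ici_eq_Ici hV hqV, add_comm]

theorem minimalSum_sUnion [WellFoundedLT α] [IsForestOrder α] {f : α → ℝ≥0∞}
    (hf : DominatesAntichains f) {𝒟 : Set (Set α)} (hne : 𝒟.Nonempty)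
    (hdir : DirectedOn (· ⊆ ·) 𝒟) :
    minimalSum f (⋃₀ 𝒟) = ⨆ U ∈ 𝒟, minimalSum f U := by
  refine le_antisymm (ENNReal.summable.tsum_le_of_sum_le fun F => ?_)
    (iSup₂_le fun U hU => minimalSum_mono hf (Set.subset_sUnion_of_mem hU))
  obtain ⟨U, hU, hFU⟩ := hdir.exists_mem_subset_of_finite_of_subset_sUnion hne
    (F.finite_toSet.image Subtype.val) (by rintro _ ⟨p, -, rfl⟩; exact p.2.prop)
  have hmin : ∀ p ∈ F.map (Function.Embedding.subtype _), Minimal (· ∈ U) p := by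
    simp only [Finset.mem_map, Function.Embedding.coe_subtype]
    rintro _ ⟨p, hp, rfl⟩
    exact p.2.mono (fun _ hx => Set.subset_sUnion_of_mem hU hx) (hFU ⟨p, hp, rfl⟩)
  calc ∑ p ∈ F, f p = ∑ p ∈ F.map (Function.Embedding.subtype _), f p :=
        (Finset.sum_map F (Function.Embedding.subtype _) f).symm
    _ = ∑ p ∈ (F.map (Function.Embedding.subtype _)).subtype (Minimal (· ∈ U)), f p :=
        (Finset.sum_subtype_of_mem f hmin).symm
    _ ≤ minimalSum f U := ENNReal.sum_le_tsum _
    _ ≤ ⨆ U ∈ 𝒟, minimalSum f U := le_iSup₂ (f := fun U _ => minimalSum f U) U hU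

theorem isValuationOn_minimalSum [WellFoundedLT α] [IsForestOrder α] {f : α → ℝ≥0∞}
    (hf : DominatesAntichains f) : IsValuationOn {U | IsUpperSet U} (minimalSum f) :=
  ⟨by simp [minimalSum], fun _ _ _ _ hUV => minimalSum_mono hf hUV,
    fun _ hU _ hV => minimalSum_add_minimalSum f hU hV⟩

theorem isScottContinuousOn_minimalSum [WellFoundedLT α] [IsForestOrder α] {f : α → ℝ≥0∞}
    (hf : DominatesAntichains f) : IsScottContinuousOn {U | IsUpperSet U} (minimalSum f) :=
  fun _ hne _ hdir => minimalSum_sUnion hf hne hdir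

theorem isLocallyFiniteOn_minimalSum {f : α → ℝ≥0∞} (hf : ∀ p, f p ≠ ⊤) :
    IsLocallyFiniteOn {U | IsUpperSet U} (minimalSum f) := fun p =>
  ⟨Set.Ici p, isUpperSet_Ici p, Set.self_mem_Ici, by rw [minimalSum_Ici]; exact (hf p).lt_top⟩

end MinimalSum

section Paths

variable {A X : Type*}

def stateAt (x : X) (l : List (Option A × X)) (k : ℕ) : X :=
  (x :: l.map Prod.snd).getD k x

theorem stateAt_cons (x : X) (s : Option A × X) (l : List (Option A × X)) {k : ℕ}
    (hk : k < l.length) : stateAt x (s :: l) (k + 1) = stateAt s.2 l k := by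
  have hk' : k < (s.2 :: l.map Prod.snd).length := by simp; omega
  simp only [stateAt, List.map_cons, List.getD_cons_succ, List.getD_eq_getElem _ _ hk']

namespace Path

theorem fn_congr (p : Path A X) {σ τ : Word A} (hστ : σ = τ) (hσ : σ <+: p.word)
    (hτ : τ <+: p.word) : p.fn ⟨σ, hσ⟩ = p.fn ⟨τ, hτ⟩ := by
  subst hστ; rfl

theorem ext {p q : Path A X} (hword : p.word = q.word)
    (hfn : ∀ σ (hp : σ <+: p.word) (hq : σ <+: q.word), p.fn ⟨σ, hp⟩ = q.fn ⟨σ, hq⟩) :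
    p = q := by
  obtain ⟨w, f⟩ := p
  obtain ⟨w', f'⟩ := q
  subst hword
  congr
  funext σ
  exact hfn σ.1 σ.2 σ.2

theorem eq_of_le_of_length_le {p q : Path A X} (h : p.le q)
    (hlen : q.word.length ≤ p.word.length) : p = q :=
  ext (h.1.eq_of_length_le hlen) fun σ hp _ => (h.2 σ hp).symm

instance : PartialOrder (Path A X) where
  le := Path.le
  le_refl p := ⟨List.prefix_refl _, fun _ _ => rfl⟩
  le_trans _ _ _ h₁ h₂ :=
    ⟨h₁.1.trans h₂.1, fun σ hσ => (h₂.2 σ (hσ.trans h₁.1)).trans (h₁.2 σ hσ)⟩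
  le_antisymm _ _ h₁ h₂ := eq_of_le_of_length_le h₁ h₂.1.length_le

instance : WellFoundedLT (Path A X) :=
  StrictMono.wellFoundedLT (f := fun p : Path A X => p.word.length) fun _ _ hpq =>
    lt_of_not_ge fun hlen => hpq.ne (eq_of_le_of_length_le hpq.le hlen)

def take (p : Path A X) (k : ℕ) : Path A X :=
  ⟨p.word.take k, fun σ => p.fn ⟨σ.1, σ.2.trans (List.take_prefix _ _)⟩⟩

theorem take_le (p : Path A X) (k : ℕ) : p.take k ≤ p :=
  ⟨List.take_prefix _ _, fun _ _ => rfl⟩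

theorem take_le_take (p : Path A X) {k m : ℕ} (hkm : k ≤ m) : p.take k ≤ p.take m :=
  ⟨List.take_prefix_take_left hkm, fun _ _ => rfl⟩

theorem eq_take_of_le {p q : Path A X} (h : p ≤ q) : p = q.take p.word.length :=
  ext (List.prefix_iff_eq_take.1 h.1) fun σ hp _ => (h.2 σ hp).symm

instance : IsForestOrder (Path A X) where
  isChain_Iic p r hr s hs _ := by
    rw [eq_take_of_le hr, eq_take_of_le hs]
    exact (le_total r.word.length s.word.length).imp (take_le_take p) (take_le_take p)

def steps (p : Path A X) : List (Option A × X) :=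
  List.ofFn fun i : Fin p.word.length =>
    (p.word[i], p.fn ⟨p.word.take (i + 1), List.take_prefix _ _⟩)

@[simp] theorem length_steps (p : Path A X) : p.steps.length = p.word.length := by
  simp [steps]

theorem getElem_steps (p : Path A X) (i : ℕ) (hi : i < p.steps.length) :
    p.steps[i] = (p.word[i]'(by simpa using hi),
      p.fn ⟨p.word.take (i + 1), List.take_prefix _ _⟩) := by
  simp [steps]

theorem word_eq_map_steps (p : Path A X) : p.word = p.steps.map Prod.fst :=
  List.ext_getElem (by simp) fun i _ _ => by simp [getElem_steps]

theorem fn_eq_stateAt (p : Path A X) (σ : Word A) (hσ : σ <+: p.word) :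
    p.fn ⟨σ, hσ⟩ = stateAt p.start p.steps σ.length := by
  have hσ' : σ = p.word.take σ.length := List.prefix_iff_eq_take.1 hσ
  have hlen : σ.length ≤ p.word.length := hσ.length_le
  rw [p.fn_congr hσ' hσ (List.take_prefix _ _)]
  cases h : σ.length with
  | zero => exact p.fn_congr (by simp) _ _
  | succ k =>
    have hk : k < p.steps.length := by simp; omega
    simp [stateAt, List.getElem?_eq_getElem hk, getElem_steps]

theorem steps_take (p : Path A X) (k : ℕ) : (p.take k).steps = p.steps.take k := by
  refine List.ext_getElem (by simp [take]) fun i hi _ => ?_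
  have hik : i < k := by simp [take] at hi; omega
  rw [List.getElem_take, getElem_steps, getElem_steps]
  refine Prod.ext List.getElem_take (p.fn_congr ?_ _ _)
  simp [take, List.take_take, Nat.min_eq_left (Nat.succ_le_of_lt hik)]

theorem eq_of_start_eq_of_steps_eq {p q : Path A X} (hstart : p.start = q.start)
    (hsteps : p.steps = q.steps) : p = q :=
  ext (by rw [p.word_eq_map_steps, q.word_eq_map_steps, hsteps]) fun σ hp hq => by
    rw [p.fn_eq_stateAt, q.fn_eq_stateAt, hstart, hsteps]

theorem le_iff_start_eq_and_steps_prefix {p q : Path A X} :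
    p ≤ q ↔ p.start = q.start ∧ p.steps <+: q.steps := by
  constructor
  · intro h
    rw [eq_take_of_le h, steps_take]
    exact ⟨rfl, List.take_prefix _ _⟩
  · rintro ⟨hstart, hsteps⟩
    have : p = q.take p.word.length := eq_of_start_eq_of_steps_eq hstart (by
      rw [steps_take, ← length_steps]; exact List.prefix_iff_eq_take.1 hsteps)
    exact this ▸ q.take_le _

end Path

end Paths

section Weights

variable {A X : Type*} (S : FPTS A X)

noncomputable def stepsWeight (x : X) : List (Option A × X) → ℝ≥0∞
  | [] => 1
  | s :: l => S.P x s.1 s.2 * stepsWeight s.2 l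

theorem stepsWeight_eq_prod (x : X) (l : List (Option A × X)) :
    stepsWeight S x l = ∏ i : Fin l.length, S.P (stateAt x l i) l[i].1 l[i].2 := by
  induction l generalizing x with
  | nil => simp [stepsWeight]
  | cons s l ih =>
    rw [stepsWeight, ih]
    refine Eq.trans ?_ (Fin.prod_univ_succ (n := l.length) _).symm
    congr 1
    refine Finset.prod_congr rfl fun i _ => ?_
    simp [stateAt_cons x s l i.2]

theorem pathWeight_eq_prod (p : Path A X) :
    pathWeight S p = ∏ i : Fin p.word.length,
      S.P (p.fn ⟨p.word.take i.1, List.take_prefix _ _⟩) (p.word.get i)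
        (p.fn ⟨p.word.take (i.1 + 1), List.take_prefix _ _⟩) := by
  rw [pathWeight, ite_eq_left_iff]
  intro hexec
  obtain ⟨σ, a, h, hzero⟩ : ∃ σ a, ∃ h : σ ++ [a] <+: p.word,
      S.P (p.fn ⟨σ, (Path.prefixSnoc σ a).trans h⟩) a (p.fn ⟨σ ++ [a], h⟩) = 0 := by
    by_contra! hpos
    exact hexec ⟨p.start, rfl, fun σ a h => pos_iff_ne_zero.2 (hpos σ a h)⟩
  have hlt : σ.length < p.word.length := by simpa using h.length_le
  refine (Finset.prod_eq_zero (Finset.mem_univ ⟨σ.length, hlt⟩) ?_).symm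
  have hget : p.word.get ⟨σ.length, hlt⟩ = a := by
    simp [← h.getElem (by simp : σ.length < (σ ++ [a]).length)]
  have htake : p.word.take σ.length = σ :=
    (List.prefix_iff_eq_take.1 ((Path.prefixSnoc σ a).trans h)).symm
  have htake' : p.word.take (σ.length + 1) = σ ++ [a] := by
    simpa using (List.prefix_iff_eq_take.1 h).symm
  simp only [hget]
  rw [p.fn_congr htake, p.fn_congr htake']
  exact hzero

theorem pathWeight_eq_stepsWeight (p : Path A X) :
    pathWeight S p = stepsWeight S p.start p.steps := by
  rw [pathWeight_eq_prod, stepsWeight_eq_prod, ← Fin.prod_congr' _ p.length_steps]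
  refine Finset.prod_congr rfl fun i _ => ?_
  have hi : (i : ℕ) ≤ p.word.length := by simpa using i.2.le
  simp [Path.getElem_steps, Path.fn_eq_stateAt, Nat.min_eq_left hi]

theorem pathWeight_le_one (p : Path A X) : pathWeight S p ≤ 1 := by
  rw [pathWeight_eq_prod]
  exact Finset.prod_le_one' fun _ _ => S.le_one _ _ _

theorem sum_P_le_one (x : X) (E : Finset (Option A × X)) : ∑ s ∈ E, S.P x s.1 s.2 ≤ 1 :=
  (ENNReal.sum_le_tsum E).trans (by rcases S.total x with h | h <;> simp [h])

theorem sum_stepsWeight_eq_sum_head (x : X) {T : Finset (List (Option A × X))} (hnil : [] ∉ T) :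
    ∑ l ∈ T, stepsWeight S x l = ∑ s ∈ T.image (·.headD (none, x)),
      S.P x s.1 s.2 * ∑ t ∈ T.preimage (List.cons s) List.cons_injective.injOn,
        stepsWeight S s.2 t := by
  have hmaps : ∀ l ∈ T, l.headD (none, x) ∈ T.image (·.headD (none, x)) :=
    fun l hl => Finset.mem_image_of_mem _ hl
  rw [← Finset.sum_fiberwise_of_maps_to hmaps]
  refine Finset.sum_congr rfl fun s _ => ?_
  have hfib : T.filter (·.headD (none, x) = s) =
      (T.preimage (List.cons s) List.cons_injective.injOn).image (List.cons s) := by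
    rw [Finset.image_preimage]
    refine Finset.filter_congr fun l hl => ?_
    cases l with
    | nil => exact absurd hl hnil
    | cons a t => simp [eq_comm]
  rw [hfib, Finset.sum_image fun _ _ _ _ h => List.cons_injective h, Finset.mul_sum]
  rfl

theorem sum_stepsWeight_le_one (N : ℕ) :
    ∀ (x : X) (T : Finset (List (Option A × X))), (∀ l ∈ T, l.length ≤ N) →
      IsAntichain (· <+: ·) (T : Set (List (Option A × X))) →
      ∑ l ∈ T, stepsWeight S x l ≤ 1 := by
  induction N with
  | zero =>
    intro x T hlen _
    have hT : T ⊆ {[]} := fun l hl => by simpa using hlen l hl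
    exact (Finset.sum_le_sum_of_subset hT).trans (by simp [stepsWeight])
  | succ N ih =>
    intro x T hlen hT
    by_cases hnil : [] ∈ T
    · have hT' : T ⊆ {[]} := fun l hl => Finset.mem_singleton.2 <|
        by_contra fun hne => hT hnil hl (Ne.symm hne) List.nil_prefix
      exact (Finset.sum_le_sum_of_subset hT').trans (by simp [stepsWeight])
    rw [sum_stepsWeight_eq_sum_head S x hnil]
    refine (Finset.sum_le_sum fun s _ => ?_).trans (sum_P_le_one S x _)
    refine mul_le_of_le_one_right' (ih s.2 _ (fun t ht => ?_) fun t ht t' ht' hne hpre => ?_)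
    · have := hlen _ (Finset.mem_preimage.1 ht)
      simp at this; omega
    · exact hT (Finset.mem_preimage.1 ht) (Finset.mem_preimage.1 ht')
        (by simpa using hne) (List.cons_prefix_cons.2 ⟨rfl, hpre⟩)

theorem sum_stepsWeight_append_le (x : X) (r : List (Option A × X))
    (T : Finset (List (Option A × X)))
    (hT : IsAntichain (· <+: ·) (T : Set (List (Option A × X)))) :
    ∑ t ∈ T, stepsWeight S x (r ++ t) ≤ stepsWeight S x r := by
  induction r generalizing x with
  | nil => simpa [stepsWeight] using sum_stepsWeight_le_one S _ x T (fun _ => T.le_sup) hT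
  | cons s r ih =>
    simp only [List.cons_append, stepsWeight, ← Finset.mul_sum]
    exact mul_le_mul_right (ih s.2) _

theorem sum_pathWeight_le_of_isAntichain (q : Path A X) (F : Finset (Path A X))
    (hF : IsAntichain (· ≤ ·) (F : Set (Path A X))) (hq : ∀ p ∈ F, q ≤ p) :
    ∑ p ∈ F, pathWeight S p ≤ pathWeight S q := by
  set tail : Path A X → List (Option A × X) := fun p => p.steps.drop q.steps.length
  have hstart : ∀ p ∈ F, p.start = q.start := fun p hp =>
    (Path.le_iff_start_eq_and_steps_prefix.1 (hq p hp)).1.symm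
  have hsteps : ∀ p ∈ F, p.steps = q.steps ++ tail p := fun p hp =>
    (List.prefix_iff_eq_append.1 (Path.le_iff_start_eq_and_steps_prefix.1 (hq p hp)).2).symm
  have hle : ∀ p ∈ F, ∀ p' ∈ F, tail p <+: tail p' → p ≤ p' := fun p hp p' hp' h =>
    Path.le_iff_start_eq_and_steps_prefix.2 ⟨(hstart p hp).trans (hstart p' hp').symm,
      hsteps p hp ▸ hsteps p' hp' ▸ (List.prefix_append_right_inj _).2 h⟩
  have hinj : Set.InjOn tail F := fun p hp p' hp' h =>
    le_antisymm (hle p hp p' hp' (by rw [h])) (hle p' hp' p hp (by rw [h]))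
  calc ∑ p ∈ F, pathWeight S p = ∑ t ∈ F.image tail, stepsWeight S q.start (q.steps ++ t) := by
        rw [Finset.sum_image hinj]
        exact Finset.sum_congr rfl fun p hp => by
          rw [pathWeight_eq_stepsWeight, hstart p hp, hsteps p hp]
    _ ≤ pathWeight S q := by
        rw [pathWeight_eq_stepsWeight]
        refine sum_stepsWeight_append_le S _ _ _ ?_
        rw [Finset.coe_image]
        rintro _ ⟨p, hp, rfl⟩ _ ⟨p', hp', rfl⟩ hne h
        exact hF hp hp' (fun hpp' => hne (hpp' ▸ rfl)) (hle p hp p' hp' h)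

theorem dominatesAntichains_pathWeight : DominatesAntichains (pathWeight S) :=
  fun q s hs hq => ENNReal.summable.tsum_le_of_sum_le fun F => by
    have hF : (F.map (Function.Embedding.subtype _) : Set (Path A X)) ⊆ s := by simp
    calc ∑ p ∈ F, pathWeight S p
        = ∑ p ∈ F.map (Function.Embedding.subtype _), pathWeight S p :=
          (Finset.sum_map F (Function.Embedding.subtype (· ∈ s)) (pathWeight S)).symm
      _ ≤ pathWeight S q :=
        sum_pathWeight_le_of_isAntichain S q _ (hs.subset hF) fun p hp => hq (hF hp)

end Weights

theorem sepMin_eq {A X : Type*} (U : Set (Path A X)) : sepMin U = {p | Minimal (· ∈ U) p} :=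
  Set.ext fun _ => (minimal_mem_iff.trans <| and_congr_right fun _ =>
    forall₂_congr fun _ _ => imp_congr_right fun _ => eq_comm).symm

theorem pathUpSets_eq (A X : Type*) : pathUpSets A X = {U | IsUpperSet U} :=
  Set.ext fun _ => ⟨fun h _ _ hpq hp => h _ hp _ hpq, fun h _ hp _ hpq => h hpq hp⟩

theorem stmt18_general {A X : Type*} (S : FPTS A X) :
    IsValuationOn (pathUpSets A X) (fun U => ∑' p : sepMin U, pathWeight S p.1) ∧
    IsScottContinuousOn (pathUpSets A X) (fun U => ∑' p : sepMin U, pathWeight S p.1) ∧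
    IsLocallyFiniteOn (pathUpSets A X) (fun U => ∑' p : sepMin U, pathWeight S p.1) := by
  have hμ : (fun U => ∑' p : sepMin U, pathWeight S p.1) = minimalSum (pathWeight S) := by
    funext U
    rw [sepMin_eq]
    rfl
  rw [hμ, pathUpSets_eq]
  exact ⟨isValuationOn_minimalSum (dominatesAntichains_pathWeight S),
    isScottContinuousOn_minimalSum (dominatesAntichains_pathWeight S),
    isLocallyFiniteOn_minimalSum fun p => ((pathWeight_le_one S p).trans_lt ENNReal.one_lt_top).ne⟩

theorem stmt18 {A X : Type*} [Countable A] [Countable X] (S : FPTS A X) :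
    IsValuationOn (pathUpSets A X) (fun U => ∑' p : sepMin U, pathWeight S p.1) ∧
    IsScottContinuousOn (pathUpSets A X) (fun U => ∑' p : sepMin U, pathWeight S p.1) ∧
    IsLocallyFiniteOn (pathUpSets A X) (fun U => ∑' p : sepMin U, pathWeight S p.1) :=
  stmt18_general S

end PaperBB
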